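/- Let H be a finite-dimensional complex inner product space, ψ ∈ H a unit vector, V_1,…,V_q unitary operators on H, and O_1,…,O_{q+1} self-adjoint operators on H with M := max_{1≤t≤q+1} ‖O_t‖. Define μ⁰ := ⟨ψ, V_q V_{q−1} ⋯ V_1 ψ⟩; for 1 ≤ l ≤ q+1, μ¹_l := ⟨ψ, V_q ⋯ V_l O_l V_{l−1} ⋯ V_1 ψ⟩; for 1 ≤ l ≤ m ≤ q+1, μ²_{l,m} := ⟨ψ, V_q ⋯ V_m O_m V_{m−1} ⋯ V_l O_l V_{l−1} ⋯ V_1 ψ⟩, extended to l > m by symmetry μ²_{m,l} := μ²_{l,m}. Then there exists a constant K, depending only on q and M (and in particular not on H, the V_t, or D), such that for every real D ≥ 1: |⟨ψ, e^{iO_{q+1}/√D} V_q e^{iO_q/√D} V_{q−1} ⋯ V_1 e^{iO_1/√D} ψ⟩ − μ⁰ − (i/√D) Σ_{l=1}^{q+1} μ¹_l + (1/(2D)) Σ_{l,m=1}^{q+1} μ²_{l,m}| ≤ K · D^{−3/2}. -/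

import Mathlib

/-!
Write `z = i/√D` and `T_t = 1 + z O_t + (z²/2) O_t²`, so that `e^{z O_t} = T_t + R_t` with
`‖R_t‖ ≤ M³ e^M |z|³`. Expanding `V_k T_k ⋯ V_1 T_1`, the coefficients `A_k`, `B_k`, `C_k` of
`1`, `z`, `z²/2` are the operators behind `μ⁰`, `Σ μ¹_l` and `Σ μ²_{l,m}`; inserting one more
factor gives `B_{k+1} = V_{k+1} (B_k + O_{k+1} A_k)` and
`C_{k+1} = V_{k+1} (C_k + 2 O_{k+1} B_k + O_{k+1}² A_k)`, which is why `μ²` is summed over all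
ordered pairs `(l, m)`. Adding the factors one at a time, the error of `A_k + z B_k + (z²/2) C_k`
is multiplied by at most `e^M` and increased by `O(|z|³)` at each step, giving
`K(q, M) |z|³ = K D^{-3/2}`. The last factor `e^{z O_{q+1}}` is the `(q+1)`-st factor with
`V_{q+1} := 1`.
-/

/-- `prodDesc f a b = f b * f (b-1) * ⋯ * f a` (the identity if `a > b`):
the product of the operators `f t`, `a ≤ t ≤ b`, composed right-to-left
(so that `f a` acts first). -/
noncomputable def prodDesc {M : Type*} [Monoid M] (f : ℕ → M) (a b : ℕ) : M :=
  (((List.range' a (b + 1 - a)).reverse).map f).prod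

open NormedSpace Finset

section Monoid

variable {M : Type*} [Monoid M]

lemma mem_Icc_of_mem_reverse_range' {a b t : ℕ}
    (ht : t ∈ (List.range' a (b + 1 - a)).reverse) : t ∈ Icc a b := by
  rw [List.mem_reverse, List.mem_range'_1] at ht
  exact mem_Icc.2 ⟨ht.1, by omega⟩

lemma prodDesc_of_lt (f : ℕ → M) {a b : ℕ} (h : b < a) : prodDesc f a b = 1 := by
  simp [prodDesc, Nat.sub_eq_zero_of_le h]

lemma prodDesc_succ_top (f : ℕ → M) {a b : ℕ} (h : a ≤ b + 1) :
    prodDesc f a (b + 1) = f (b + 1) * prodDesc f a b := by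
  rw [prodDesc, show b + 1 + 1 - a = (b + 1 - a) + 1 by omega, List.range'_1_concat,
    show a + (b + 1 - a) = b + 1 by omega]
  simp [prodDesc]

lemma prodDesc_congr {f g : ℕ → M} {a b : ℕ} (h : ∀ t ∈ Icc a b, f t = g t) :
    prodDesc f a b = prodDesc g a b :=
  congrArg List.prod <| List.map_congr_left fun t ht => h t (mem_Icc_of_mem_reverse_range' ht)

lemma prodDesc_update_of_lt (f : ℕ → M) (x : M) {a b n : ℕ} (h : b < n) :
    prodDesc (Function.update f n x) a b = prodDesc f a b :=
  prodDesc_congr fun t ht => Function.update_of_ne (by rw [mem_Icc] at ht; omega) _ _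

lemma prodDesc_update_succ_one (f : ℕ → M) {a b : ℕ} (h : a ≤ b + 1) :
    prodDesc (Function.update f (b + 1) 1) a (b + 1) = prodDesc f a b := by
  rw [prodDesc_succ_top _ h, Function.update_self, one_mul,
    prodDesc_update_of_lt _ _ b.lt_succ_self]

lemma prodDesc_update_succ_one_mul (V W : ℕ → M) (k : ℕ) :
    prodDesc (fun t => Function.update V (k + 1) 1 t * W t) 1 (k + 1) =
      W (k + 1) * prodDesc (fun t => V t * W t) 1 k := by
  rw [prodDesc_succ_top _ (by omega), Function.update_self, one_mul]
  congr 1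
  exact prodDesc_congr fun t ht => by
    rw [Function.update_of_ne (by rw [mem_Icc] at ht; omega)]

end Monoid

lemma norm_prodDesc_le_one {A : Type*} [NormedRing A] [NormOneClass A] {f : ℕ → A} {a b : ℕ}
    (hf : ∀ t ∈ Icc a b, ‖f t‖ ≤ 1) : ‖prodDesc f a b‖ ≤ 1 := by
  refine (List.norm_prod_le _).trans ?_
  rw [List.map_map]
  exact (List.prod_map_le_prod_map₀ _ (fun _ => 1) (fun _ _ => norm_nonneg _)
    fun t ht => hf t (mem_Icc_of_mem_reverse_range' ht)).trans_eq (by simp)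

lemma norm_exp_sub_sum_range_le (𝕂 : Type*) {A : Type*} [RCLike 𝕂] [NormedRing A]
    [NormOneClass A] [NormedAlgebra 𝕂 A] [CompleteSpace A] (x : A) (n : ℕ) :
    ‖exp x - ∑ m ∈ range n, ((m.factorial : 𝕂)⁻¹) • x ^ m‖ ≤ ‖x‖ ^ n * Real.exp ‖x‖ := by
  have hrem := (hasSum_nat_add_iff' n).2 (exp_series_hasSum_exp' (𝕂 := 𝕂) x)
  have hexp : HasSum (fun m => ‖x‖ ^ n * (‖x‖ ^ m / m.factorial)) (‖x‖ ^ n * Real.exp ‖x‖) := by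
    rw [Real.exp_eq_exp_ℝ]
    exact (expSeries_div_hasSum_exp ‖x‖).mul_left _
  refine hrem.norm_le_of_bounded hexp fun m => ?_
  rw [norm_smul, norm_inv, RCLike.norm_natCast, inv_mul_eq_div]
  calc ‖x ^ (m + n)‖ / (m + n).factorial ≤ ‖x‖ ^ (m + n) / m.factorial :=
        div_le_div₀ (by positivity) (norm_pow_le _ _) (by positivity)
          (by exact_mod_cast Nat.factorial_le (Nat.le_add_right m n))
    _ = ‖x‖ ^ n * (‖x‖ ^ m / m.factorial) := by ring

lemma norm_exp_smul_sub_quadratic_le {𝕂 A : Type*} [RCLike 𝕂] [NormedRing A] [NormOneClass A]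
    [NormedAlgebra 𝕂 A] [CompleteSpace A] (z : 𝕂) (a : A) :
    ‖exp (z • a) - (1 + z • a + (z ^ 2 / 2) • (a * a))‖ ≤ ‖z • a‖ ^ 3 * Real.exp ‖z • a‖ := by
  have hT : ∑ m ∈ range 3, ((m.factorial : 𝕂)⁻¹) • (z • a) ^ m =
      1 + z • a + (z ^ 2 / 2) • (a * a) := by
    simp [sum_range_succ, smul_pow, sq, smul_smul, div_eq_inv_mul]
  exact hT ▸ norm_exp_sub_sum_range_le 𝕂 (z • a) 3

section Insertions

variable {A : Type*} [Ring A] (V O : ℕ → A)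

noncomputable def singleInsertion (k l : ℕ) : A :=
  prodDesc V l k * O l * prodDesc V 1 (l - 1)

noncomputable def doubleInsertion (k l m : ℕ) : A :=
  prodDesc V (max l m) k * O (max l m) * prodDesc V (min l m) (max l m - 1) * O (min l m) *
    prodDesc V 1 (min l m - 1)

noncomputable def firstOrderTerm (k : ℕ) : A :=
  ∑ l ∈ Icc 1 k, singleInsertion V O k l

noncomputable def secondOrderTerm (k : ℕ) : A :=
  ∑ l ∈ Icc 1 k, ∑ m ∈ Icc 1 k, doubleInsertion V O k l m

variable {V O} {k : ℕ}

lemma singleInsertion_succ {l : ℕ} (hl : l ≤ k + 1) :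
    singleInsertion V O (k + 1) l = V (k + 1) * singleInsertion V O k l := by
  simp only [singleInsertion, prodDesc_succ_top V hl, mul_assoc]

lemma doubleInsertion_succ {l m : ℕ} (h : max l m ≤ k + 1) :
    doubleInsertion V O (k + 1) l m = V (k + 1) * doubleInsertion V O k l m := by
  simp only [doubleInsertion, prodDesc_succ_top V h, mul_assoc]

lemma doubleInsertion_comm (l m : ℕ) : doubleInsertion V O k l m = doubleInsertion V O k m l := by
  simp only [doubleInsertion, max_comm, min_comm]

lemma doubleInsertion_succ_right {l : ℕ} (hl : l ≤ k + 1) :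
    doubleInsertion V O k l (k + 1) = O (k + 1) * singleInsertion V O k l := by
  simp only [doubleInsertion, singleInsertion, max_eq_right hl, min_eq_left hl,
    prodDesc_of_lt V k.lt_succ_self, Nat.add_sub_cancel, one_mul, mul_assoc]

lemma sum_singleInsertion_Icc_succ :
    ∑ l ∈ Icc 1 (k + 1), singleInsertion V O k l =
      firstOrderTerm V O k + O (k + 1) * prodDesc V 1 k := by
  rw [sum_Icc_succ_top (by omega), firstOrderTerm, singleInsertion,
    prodDesc_of_lt V k.lt_succ_self, one_mul, Nat.add_sub_cancel]

lemma firstOrderTerm_succ :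
    firstOrderTerm V O (k + 1) =
      V (k + 1) * (firstOrderTerm V O k + O (k + 1) * prodDesc V 1 k) := by
  rw [← sum_singleInsertion_Icc_succ, mul_sum, firstOrderTerm]
  exact sum_congr rfl fun l hl => singleInsertion_succ (mem_Icc.1 hl).2

lemma secondOrderTerm_succ :
    secondOrderTerm V O (k + 1) = V (k + 1) * (secondOrderTerm V O k
      + O (k + 1) * firstOrderTerm V O k
      + O (k + 1) * (firstOrderTerm V O k + O (k + 1) * prodDesc V 1 k)) := by
  have hsucc : secondOrderTerm V O (k + 1) =
      V (k + 1) * ∑ l ∈ Icc 1 (k + 1), ∑ m ∈ Icc 1 (k + 1), doubleInsertion V O k l m := by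
    simp only [secondOrderTerm, mul_sum]
    refine sum_congr rfl fun l hl => sum_congr rfl fun m hm => doubleInsertion_succ ?_
    simp only [mem_Icc] at hl hm
    omega
  have hcol : ∀ l ∈ Icc 1 (k + 1), doubleInsertion V O k l (k + 1) =
      O (k + 1) * singleInsertion V O k l :=
    fun l hl => doubleInsertion_succ_right (mem_Icc.1 hl).2
  have hrow : ∑ m ∈ Icc 1 (k + 1), doubleInsertion V O k (k + 1) m =
      O (k + 1) * (firstOrderTerm V O k + O (k + 1) * prodDesc V 1 k) := by
    rw [← sum_singleInsertion_Icc_succ, mul_sum]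
    exact sum_congr rfl fun m hm => (doubleInsertion_comm _ m).trans (hcol m hm)
  rw [hsucc, sum_Icc_succ_top (by omega), hrow]
  simp only [sum_Icc_succ_top (show 1 ≤ k + 1 by omega) (doubleInsertion V O k _),
    sum_add_distrib]
  rw [sum_congr rfl fun l hl => hcol l (Icc_subset_Icc le_rfl k.le_succ hl), ← mul_sum]
  rfl

lemma singleInsertion_update_succ_one {l : ℕ} (hl : l ≤ k + 1) :
    singleInsertion (Function.update V (k + 1) 1) O (k + 1) l = singleInsertion V O k l := by
  rw [singleInsertion, singleInsertion, prodDesc_update_succ_one V hl,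
    prodDesc_update_of_lt _ _ (show l - 1 < k + 1 by omega)]

lemma doubleInsertion_update_succ_one {l m : ℕ} (h : max l m ≤ k + 1) :
    doubleInsertion (Function.update V (k + 1) 1) O (k + 1) l m = doubleInsertion V O k l m := by
  rw [doubleInsertion, doubleInsertion, prodDesc_update_succ_one V h,
    prodDesc_update_of_lt _ _ (show max l m - 1 < k + 1 by omega),
    prodDesc_update_of_lt _ _ (show min l m - 1 < k + 1 by omega)]

end Insertions

section Norms

variable {A : Type*} [NormedRing A] [NormOneClass A] {V O : ℕ → A} {M : ℝ} {k : ℕ}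

lemma norm_singleInsertion_le (hV : ∀ t ∈ Icc 1 k, ‖V t‖ ≤ 1) (hO : ∀ t ∈ Icc 1 k, ‖O t‖ ≤ M)
    {l : ℕ} (hl : l ∈ Icc 1 k) : ‖singleInsertion V O k l‖ ≤ M := by
  rw [mem_Icc] at hl
  have hV₁ : ‖prodDesc V l k‖ ≤ 1 :=
    norm_prodDesc_le_one fun t ht => hV t (Icc_subset_Icc hl.1 le_rfl ht)
  have hV₂ : ‖prodDesc V 1 (l - 1)‖ ≤ 1 :=
    norm_prodDesc_le_one fun t ht => hV t (Icc_subset_Icc le_rfl (by omega) ht)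
  simpa [singleInsertion] using
    norm_mul_le_of_le (norm_mul_le_of_le hV₁ (hO l (mem_Icc.2 hl))) hV₂

lemma norm_doubleInsertion_le (hV : ∀ t ∈ Icc 1 k, ‖V t‖ ≤ 1) (hO : ∀ t ∈ Icc 1 k, ‖O t‖ ≤ M)
    {l m : ℕ} (hl : l ∈ Icc 1 k) (hm : m ∈ Icc 1 k) : ‖doubleInsertion V O k l m‖ ≤ M * M := by
  rw [mem_Icc] at hl hm
  have hV₁ : ‖prodDesc V (max l m) k‖ ≤ 1 :=
    norm_prodDesc_le_one fun t ht => hV t (Icc_subset_Icc (by omega) le_rfl ht)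
  have hV₂ : ‖prodDesc V (min l m) (max l m - 1)‖ ≤ 1 :=
    norm_prodDesc_le_one fun t ht => hV t (Icc_subset_Icc (by omega) (by omega) ht)
  have hV₃ : ‖prodDesc V 1 (min l m - 1)‖ ≤ 1 :=
    norm_prodDesc_le_one fun t ht => hV t (Icc_subset_Icc le_rfl (by omega) ht)
  have hO₁ := hO (max l m) (mem_Icc.2 ⟨by omega, by omega⟩)
  have hO₂ := hO (min l m) (mem_Icc.2 ⟨by omega, by omega⟩)
  simpa [doubleInsertion] using norm_mul_le_of_le (norm_mul_le_of_le (norm_mul_le_of_le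
    (norm_mul_le_of_le hV₁ hO₁) hV₂) hO₂) hV₃

lemma norm_firstOrderTerm_le (hV : ∀ t ∈ Icc 1 k, ‖V t‖ ≤ 1) (hO : ∀ t ∈ Icc 1 k, ‖O t‖ ≤ M) :
    ‖firstOrderTerm V O k‖ ≤ k * M := by
  simpa [firstOrderTerm] using norm_sum_le_of_le _ fun l hl => norm_singleInsertion_le hV hO hl

lemma norm_secondOrderTerm_le (hV : ∀ t ∈ Icc 1 k, ‖V t‖ ≤ 1) (hO : ∀ t ∈ Icc 1 k, ‖O t‖ ≤ M) :
    ‖secondOrderTerm V O k‖ ≤ (k * M) ^ 2 := by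
  calc ‖secondOrderTerm V O k‖ ≤ ∑ _l ∈ Icc 1 k, ∑ _m ∈ Icc 1 k, M * M :=
        norm_sum_le_of_le _ fun l hl =>
          norm_sum_le_of_le _ fun m hm => norm_doubleInsertion_le hV hO hl hm
    _ = (k * M) ^ 2 := by simp; ring

end Norms

section Approx

variable {𝕂 A : Type*} [RCLike 𝕂] [Ring A] [Algebra 𝕂 A] {V O : ℕ → A} {k : ℕ}

noncomputable def secondOrderApprox (V O : ℕ → A) (z : 𝕂) (k : ℕ) : A :=
  prodDesc V 1 k + z • firstOrderTerm V O k + (z ^ 2 / 2) • secondOrderTerm V O k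

lemma secondOrderApprox_succ (z : 𝕂) :
    V (k + 1) * ((1 + z • O (k + 1) + (z ^ 2 / 2) • (O (k + 1) * O (k + 1))) *
        secondOrderApprox V O z k) - secondOrderApprox V O z (k + 1) =
      V (k + 1) * ((z ^ 3 / 2) • (O (k + 1) * (secondOrderTerm V O k +
          O (k + 1) * firstOrderTerm V O k)) +
        (z ^ 4 / 4) • (O (k + 1) * (O (k + 1) * secondOrderTerm V O k))) := by
  rw [secondOrderApprox, secondOrderApprox, prodDesc_succ_top V (by omega), firstOrderTerm_succ,
    secondOrderTerm_succ]
  simp only [mul_add, add_mul, smul_add, smul_mul_assoc, mul_smul_comm, smul_smul, one_mul,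
    mul_assoc]
  match_scalars <;> ring

lemma secondOrderApprox_update_succ_one (z : 𝕂) :
    secondOrderApprox (Function.update V (k + 1) 1) O z (k + 1) =
      prodDesc V 1 k + z • ∑ l ∈ Icc 1 (k + 1), singleInsertion V O k l +
        (z ^ 2 / 2) • ∑ l ∈ Icc 1 (k + 1), ∑ m ∈ Icc 1 (k + 1), doubleInsertion V O k l m := by
  have h₁ : firstOrderTerm (Function.update V (k + 1) 1) O (k + 1) =
      ∑ l ∈ Icc 1 (k + 1), singleInsertion V O k l :=
    sum_congr rfl fun l hl => singleInsertion_update_succ_one (mem_Icc.1 hl).2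
  have h₂ : secondOrderTerm (Function.update V (k + 1) 1) O (k + 1) =
      ∑ l ∈ Icc 1 (k + 1), ∑ m ∈ Icc 1 (k + 1), doubleInsertion V O k l m := by
    refine sum_congr rfl fun l hl => sum_congr rfl fun m hm => ?_
    simp only [mem_Icc] at hl hm
    exact doubleInsertion_update_succ_one (by omega)
  rw [secondOrderApprox, prodDesc_update_succ_one V (by omega), h₁, h₂]

end Approx

/- The summands of the successor step bound, in order: the propagated error (times `‖e^{zO}‖ ≤
e^M`), the exponential remainder `‖e^{zO} - T‖ ≤ M³ e^M |z|³` against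
`‖secondOrderApprox‖ ≤ 1 + kM + (kM)²/2`, and the cubic and quartic leftovers of
`secondOrderApprox_succ`. -/
noncomputable def expansionConst (M : ℝ) : ℕ → ℝ
  | 0 => 0
  | k + 1 => Real.exp M * (expansionConst M k + M ^ 3 * (1 + k * M + (k * M) ^ 2 / 2)) +
      M * ((k * M) ^ 2 + M * (k * M)) / 2 + M ^ 2 * (k * M) ^ 2 / 4

section Bound

variable {𝕂 A : Type*} [RCLike 𝕂] [NormedRing A] [NormOneClass A] [NormedAlgebra 𝕂 A]
  {V O : ℕ → A} {M : ℝ} {z : 𝕂} {k : ℕ}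

lemma norm_secondOrderApprox_le (hz : ‖z‖ ≤ 1) (hV : ∀ t ∈ Icc 1 k, ‖V t‖ ≤ 1)
    (hO : ∀ t ∈ Icc 1 k, ‖O t‖ ≤ M) :
    ‖secondOrderApprox V O z k‖ ≤ 1 + k * M + (k * M) ^ 2 / 2 := by
  have hz2 : ‖z ^ 2 / 2‖ ≤ 1 / 2 := by
    rw [norm_div, norm_pow, RCLike.norm_ofNat]
    gcongr
    exact pow_le_one₀ (norm_nonneg z) hz
  refine norm_add₃_le.trans (add_le_add_three (norm_prodDesc_le_one hV) ?_ ?_)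
  · rw [norm_smul]
    simpa using mul_le_mul hz (norm_firstOrderTerm_le hV hO) (norm_nonneg _) zero_le_one
  · rw [norm_smul, div_eq_inv_mul _ (2 : ℝ), ← one_div]
    exact mul_le_mul hz2 (norm_secondOrderTerm_le hV hO) (norm_nonneg _) (by norm_num)

lemma norm_secondOrderApprox_succ_sub_le (hz : ‖z‖ ≤ 1) (hV : ∀ t ∈ Icc 1 k, ‖V t‖ ≤ 1)
    (hO : ∀ t ∈ Icc 1 k, ‖O t‖ ≤ M) (hVk : ‖V (k + 1)‖ ≤ 1) (hOk : ‖O (k + 1)‖ ≤ M) :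
    ‖V (k + 1) * ((1 + z • O (k + 1) + (z ^ 2 / 2) • (O (k + 1) * O (k + 1))) *
        secondOrderApprox V O z k) - secondOrderApprox V O z (k + 1)‖ ≤
      (M * ((k * M) ^ 2 + M * (k * M)) / 2 + M ^ 2 * (k * M) ^ 2 / 4) * ‖z‖ ^ 3 := by
  have hB := norm_firstOrderTerm_le hV hO
  have hC := norm_secondOrderTerm_le hV hO
  have h₃ : ‖O (k + 1) * (secondOrderTerm V O k + O (k + 1) * firstOrderTerm V O k)‖ ≤
      M * ((k * M) ^ 2 + M * (k * M)) :=
    norm_mul_le_of_le hOk (norm_add_le_of_le hC (norm_mul_le_of_le hOk hB))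
  have h₄ : ‖O (k + 1) * (O (k + 1) * secondOrderTerm V O k)‖ ≤ M ^ 2 * (k * M) ^ 2 := by
    simpa [sq, mul_assoc] using norm_mul_le_of_le hOk (norm_mul_le_of_le hOk hC)
  have hz4 : ‖z‖ ^ 4 ≤ ‖z‖ ^ 3 := pow_le_pow_of_le_one (norm_nonneg z) hz (by norm_num)
  rw [secondOrderApprox_succ]
  refine (norm_mul_le_of_le hVk (norm_add_le_of_le (norm_smul_le _ _) (norm_smul_le _ _))).trans ?_
  simp only [norm_div, norm_pow, RCLike.norm_ofNat]
  calc 1 * (‖z‖ ^ 3 / 2 * ‖O (k + 1) * (secondOrderTerm V O k + O (k + 1) * firstOrderTerm V O k)‖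
        + ‖z‖ ^ 4 / 4 * ‖O (k + 1) * (O (k + 1) * secondOrderTerm V O k)‖)
      ≤ 1 * (‖z‖ ^ 3 / 2 * (M * ((k * M) ^ 2 + M * (k * M)))
        + ‖z‖ ^ 3 / 4 * (M ^ 2 * (k * M) ^ 2)) := by gcongr
    _ = _ := by ring

theorem norm_prodDesc_mul_exp_sub_secondOrderApprox_le [CompleteSpace A] (hz : ‖z‖ ≤ 1)
    (hV : ∀ t ∈ Icc 1 k, ‖V t‖ ≤ 1) (hO : ∀ t ∈ Icc 1 k, ‖O t‖ ≤ M) :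
    ‖prodDesc (fun t => V t * exp (z • O t)) 1 k - secondOrderApprox V O z k‖ ≤
      expansionConst M k * ‖z‖ ^ 3 := by
  induction k with
  | zero =>
    simp [prodDesc_of_lt, secondOrderApprox, firstOrderTerm, secondOrderTerm, expansionConst]
  | succ k ih =>
    have hVk : ∀ t ∈ Icc 1 k, ‖V t‖ ≤ 1 := fun t ht => hV t (Icc_subset_Icc le_rfl k.le_succ ht)
    have hOk : ∀ t ∈ Icc 1 k, ‖O t‖ ≤ M := fun t ht => hO t (Icc_subset_Icc le_rfl k.le_succ ht)
    have hV₁ := hV (k + 1) (mem_Icc.2 ⟨k.succ_pos, le_rfl⟩)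
    have hO₁ := hO (k + 1) (mem_Icc.2 ⟨k.succ_pos, le_rfl⟩)
    have hM : 0 ≤ M := (norm_nonneg _).trans hO₁
    set x := z • O (k + 1)
    set T : A := 1 + z • O (k + 1) + (z ^ 2 / 2) • (O (k + 1) * O (k + 1))
    have hx : ‖x‖ ≤ ‖z‖ * M := (norm_smul_le _ _).trans (by gcongr)
    have hxM : ‖x‖ ≤ M := hx.trans (mul_le_of_le_one_left hM hz)
    have hE : ‖exp x‖ ≤ Real.exp M := by
      have := norm_exp_sub_sum_range_le 𝕂 x 0
      rw [sum_range_zero, sub_zero, pow_zero, one_mul] at this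
      exact this.trans (Real.exp_le_exp.2 hxM)
    have hR : ‖exp x - T‖ ≤ Real.exp M * M ^ 3 * ‖z‖ ^ 3 :=
      calc ‖exp x - T‖ ≤ ‖x‖ ^ 3 * Real.exp ‖x‖ := norm_exp_smul_sub_quadratic_le z (O (k + 1))
        _ ≤ (‖z‖ * M) ^ 3 * Real.exp M := by gcongr
        _ = Real.exp M * M ^ 3 * ‖z‖ ^ 3 := by ring
    have hsplit : prodDesc (fun t => V t * exp (z • O t)) 1 (k + 1) -
        secondOrderApprox V O z (k + 1) =
          V (k + 1) * (exp x * (prodDesc (fun t => V t * exp (z • O t)) 1 k -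
            secondOrderApprox V O z k)) +
          V (k + 1) * ((exp x - T) * secondOrderApprox V O z k) +
          (V (k + 1) * (T * secondOrderApprox V O z k) - secondOrderApprox V O z (k + 1)) := by
      rw [prodDesc_succ_top _ (by omega)]
      noncomm_ring
    rw [hsplit]
    refine (norm_add₃_le.trans (add_le_add_three
      (norm_mul_le_of_le hV₁ (norm_mul_le_of_le hE (ih hVk hOk)))
      (norm_mul_le_of_le hV₁ (norm_mul_le_of_le hR (norm_secondOrderApprox_le hz hVk hOk)))
      (norm_secondOrderApprox_succ_sub_le hz hVk hOk hV₁ hO₁))).trans_eq ?_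
    simp only [expansionConst]
    ring

end Bound

lemma norm_inner_apply_le_opNorm {𝕜 H : Type*} [RCLike 𝕜] [NormedAddCommGroup H]
    [InnerProductSpace 𝕜 H] {ψ : H} (hψ : ‖ψ‖ = 1) (Y : H →L[𝕜] H) :
    ‖inner 𝕜 ψ (Y ψ)‖ ≤ ‖Y‖ :=
  calc ‖inner 𝕜 ψ (Y ψ)‖ ≤ ‖ψ‖ * (‖Y‖ * ‖ψ‖) :=
        (norm_inner_le_norm _ _).trans (by gcongr; exact Y.le_opNorm ψ)
    _ = ‖Y‖ := by rw [hψ, one_mul, mul_one]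

lemma norm_I_div_sqrt_pow_three {D : ℝ} (hD : 0 ≤ D) :
    ‖Complex.I / (Real.sqrt D : ℂ)‖ ^ 3 = D ^ (-(3 / 2) : ℝ) := by
  rw [norm_div, Complex.norm_I, Complex.norm_real, Real.norm_of_nonneg (Real.sqrt_nonneg D),
    Real.sqrt_eq_rpow, one_div, ← Real.rpow_neg hD, ← Real.rpow_mul_natCast hD]
  norm_num

theorem stmt0 (q : ℕ) (M : ℝ) :
    ∃ K : ℝ,
      ∀ (H : Type) [NormedAddCommGroup H] [InnerProductSpace ℂ H] [FiniteDimensional ℂ H],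
        ∀ (ψ : H) (V O : ℕ → H →L[ℂ] H),
          ‖ψ‖ = 1 →
          (∀ t, 1 ≤ t → t ≤ q → V t ∈ unitary (H →L[ℂ] H)) →
          (∀ t, 1 ≤ t → t ≤ q + 1 → IsSelfAdjoint (O t)) →
          (∀ t, 1 ≤ t → t ≤ q + 1 → ‖O t‖ ≤ M) →
          ∀ D : ℝ, 1 ≤ D →
            ‖(inner ℂ ψ
                  ((NormedSpace.exp ((Complex.I / (Real.sqrt D : ℂ)) • O (q + 1)) *
                      prodDesc
                        (fun t =>
                          V t * NormedSpace.exp ((Complex.I / (Real.sqrt D : ℂ)) • O t))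
                        1 q) ψ) : ℂ)
                - (inner ℂ ψ (prodDesc V 1 q ψ) : ℂ)
                - (Complex.I / (Real.sqrt D : ℂ)) *
                    ∑ l ∈ Finset.Icc 1 (q + 1),
                      (inner ℂ ψ ((prodDesc V l q * O l * prodDesc V 1 (l - 1)) ψ) : ℂ)
                + (1 / (2 * (D : ℂ))) *
                    ∑ l ∈ Finset.Icc 1 (q + 1), ∑ m ∈ Finset.Icc 1 (q + 1),
                      (inner ℂ ψ
                          ((prodDesc V (max l m) q * O (max l m) *
                              prodDesc V (min l m) (max l m - 1) * O (min l m) *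
                              prodDesc V 1 (min l m - 1)) ψ) : ℂ)‖
              ≤ K * D ^ (-(3 / 2) : ℝ) := by
  refine ⟨expansionConst M (q + 1), fun H _ _ _ ψ V O hψ hV _ hO D hD => ?_⟩
  have : Nontrivial H := nontrivial_of_ne ψ 0 (by rintro rfl; simp at hψ)
  set z : ℂ := Complex.I / (Real.sqrt D : ℂ)
  have hz : ‖z‖ ≤ 1 := by
    rw [norm_div, Complex.norm_I, Complex.norm_real, Real.norm_of_nonneg (Real.sqrt_nonneg D)]
    exact div_le_one_of_le₀ (Real.one_le_sqrt.2 hD) (Real.sqrt_nonneg D)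
  have hz2 : z ^ 2 / 2 = -(1 / (2 * (D : ℂ))) := by
    rw [div_pow, Complex.I_sq, ← Complex.ofReal_pow, Real.sq_sqrt (by linarith)]
    field_simp
  have hV' : ∀ t ∈ Icc 1 (q + 1), ‖Function.update V (q + 1) 1 t‖ ≤ 1 := fun t ht => by
    rw [mem_Icc] at ht
    rcases ht.2.eq_or_lt with rfl | ht'
    · simp
    · rw [Function.update_of_ne ht'.ne, CStarRing.norm_of_mem_unitary (hV t ht.1 (by omega))]
  have hbound := norm_prodDesc_mul_exp_sub_secondOrderApprox_le hz hV'
    fun t ht => hO t (mem_Icc.1 ht).1 (mem_Icc.1 ht).2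
  rw [prodDesc_update_succ_one_mul, secondOrderApprox_update_succ_one,
    norm_I_div_sqrt_pow_three (by linarith)] at hbound
  refine Eq.trans_le (congrArg norm ?_) ((norm_inner_apply_le_opNorm hψ _).trans hbound)
  simp only [sub_apply, add_apply, smul_apply, _root_.sum_apply, inner_sub_right,
    inner_add_right, inner_smul_right, inner_sum, singleInsertion, doubleInsertion, hz2]
  ring
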